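/- arXiv:1912.06372 — 2 statements merged into one kernel-verified Lean document; each statement's English description precedes it below -/
import Mathlib

section
/- Let H∞ be a hyperplane of Π = PG(2n+m, q) with q = p^h, p prime. Let U and T be two (m+n−1)-dimensional subspaces of H∞ and let r be a point of Π not in H∞. If a is the incidence vector (over F_p, indexed by the points of Π) of the span ⟨U, r⟩ and b the incidence vector of ⟨T, r⟩, then a − b lies in the dual code of the p-ary code C_n(Π) generated by the incidence vectors of n-dimensional projective subspaces of Π. -/
attribute [local instance] Classical.propDecidable

open Projectivization Module

section Aux

variable {K V : Type*} [Field K] [Fintype K] [AddCommGroup V] [Module K V]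
  [Fintype (Projectivization K V)]

lemma rep_mem_of_le {S : Submodule K V} {x : Projectivization K V}
    (hx : x.submodule ≤ S) : x.rep ∈ S :=
  hx (by rw [submodule_eq]; exact Submodule.mem_span_singleton_self _)

noncomputable def pointsEquiv (S : Submodule K V) :
    Kˣ × {x : Projectivization K V // x.submodule ≤ S} ≃ {v : S // v ≠ 0} :=
  Equiv.ofBijective
    (fun y => ⟨⟨(y.1 : K) • y.2.1.rep, S.smul_mem _ (rep_mem_of_le y.2.2)⟩,
      fun hzero => y.2.1.rep_nonzero (by
        have : (y.1 : K) • y.2.1.rep = 0 := congrArg Subtype.val hzero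
        exact (smul_eq_zero.mp this).resolve_left y.1.ne_zero)⟩) (by
    constructor
    · rintro ⟨c, x, hx⟩ ⟨c', x', hx'⟩ hcc
      have hv : (c : K) • x.rep = (c' : K) • x'.rep :=
        congrArg (fun z => ((z : {v : S // v ≠ 0}).1 : V)) hcc
      have hne : (c : K) • x.rep ≠ 0 := by
        simp [smul_eq_zero, x.rep_nonzero, c.ne_zero]
      have hne' : (c' : K) • x'.rep ≠ 0 := hv ▸ hne
      have hmk : Projectivization.mk K ((c : K) • x.rep) hne = x := by
        conv_rhs => rw [← x.mk_rep]
        rw [mk_eq_mk_iff]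
        exact ⟨c, rfl⟩
      have hmk' : Projectivization.mk K ((c' : K) • x'.rep) hne' = x' := by
        conv_rhs => rw [← x'.mk_rep]
        rw [mk_eq_mk_iff]
        exact ⟨c', rfl⟩
      have hxx : x = x' := by
        rw [← hmk, ← hmk']
        congr 1
      subst hxx
      have : (c : K) = (c' : K) := by
        have := hv
        by_contra hne2
        have h3 : ((c : K) - (c' : K)) • x.rep = 0 := by
          rw [sub_smul, this, sub_self]
        exact x.rep_nonzero ((smul_eq_zero.mp h3).resolve_left (sub_ne_zero.mpr hne2))
      exact Prod.ext (Units.ext this) (Subtype.ext rfl)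
    · rintro ⟨⟨v, hvS⟩, hv⟩
      have hv' : v ≠ 0 := fun h0 => hv (Subtype.ext h0)
      obtain ⟨a, ha⟩ := exists_smul_eq_mk_rep K v hv'
      refine ⟨⟨a⁻¹, ⟨Projectivization.mk K v hv', by
        rw [submodule_mk, Submodule.span_singleton_le_iff_mem]; exact hvS⟩⟩, ?_⟩
      apply Subtype.ext
      apply Subtype.ext
      show ((a⁻¹ : Kˣ) : K) • (Projectivization.mk K v hv').rep = v
      rw [← ha]
      simp [Units.smul_def, smul_smul])

lemma sum_indicator_eq_one (p h : ℕ) (hp : p.Prime) (hh : 1 ≤ h)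
    (hK : Fintype.card K = p ^ h) [FiniteDimensional K V] [Fintype V]
    (S : Submodule K V) (hS : S ≠ ⊥) :
    ∑ x : Projectivization K V, (if x.submodule ≤ S then (1 : ZMod p) else 0) = 1 := by
  classical
  haveI : Fintype S := Fintype.ofFinite S
  haveI : Fintype {v : S // v ≠ 0} := Fintype.ofFinite _
  have hcard : Fintype.card Kˣ * Fintype.card {x : Projectivization K V // x.submodule ≤ S}
      = Fintype.card S - 1 := by
    rw [← Fintype.card_prod, Fintype.card_congr (pointsEquiv S)]
    simp [Fintype.card_subtype_compl]
  have hSd : 1 ≤ finrank K S := by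
    rcases Nat.eq_zero_or_pos (finrank K S) with h0 | h0
    · exact absurd (Submodule.finrank_eq_zero.mp h0) hS
    · exact h0
  have hScard : Fintype.card S = (p ^ h) ^ finrank K S := by
    rw [card_eq_pow_finrank (K := K) (V := S), hK]
  haveI : Fact p.Prime := ⟨hp⟩
  have hq0 : ((p ^ h : ℕ) : ZMod p) = 0 := by
    push_cast
    rw [ZMod.natCast_self]
    exact zero_pow (by omega)
  have hSpos : 1 ≤ Fintype.card S := Fintype.card_pos
  have hKpos : 1 ≤ Fintype.card K := Fintype.card_pos
  -- cast to ZMod p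
  have hz : ((Fintype.card Kˣ : ℕ) : ZMod p) *
      (Fintype.card {x : Projectivization K V // x.submodule ≤ S} : ZMod p) = -1 := by
    rw [← Nat.cast_mul, hcard, Nat.cast_sub hSpos, hScard]
    push_cast [hq0]
    rw [zero_pow (by omega)]
    ring
  have hu : ((Fintype.card Kˣ : ℕ) : ZMod p) = -1 := by
    rw [Fintype.card_units, Nat.cast_sub hKpos, hK, hq0]
    simp
  rw [hu] at hz
  have hA : (Fintype.card {x : Projectivization K V // x.submodule ≤ S} : ZMod p) = 1 := by
    linear_combination -hz
  rw [Finset.sum_boole, ← hA, Fintype.card_subtype]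

end Aux

/-- Lemma on the dual code of `C_n(PG(2n+m,q))`: if `U, T` are `(m+n-1)`-dimensional
projective subspaces of a hyperplane `H∞` of `Π = PG(2n+m,q)` and `r` is a projective point
off `H∞`, then the difference of the incidence vectors of `⟨U,r⟩` and `⟨T,r⟩` is orthogonal
to every codeword of the `p`-ary code spanned by incidence vectors of `n`-dimensional
projective subspaces of `Π`. -/
theorem diff_of_cone_incidence_vectors_mem_dual
    (p h n m : ℕ) (hp : p.Prime) (hh : 1 ≤ h)
    (K : Type*) [Field K] [Fintype K] (hK : Fintype.card K = p ^ h)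
    [Fintype (Projectivization K (Fin (2 * n + m + 1) → K))]
    (H U T : Submodule K (Fin (2 * n + m + 1) → K))
    (hH : Module.finrank K H = 2 * n + m)
    (hU : U ≤ H) (hT : T ≤ H)
    (hUdim : Module.finrank K U = m + n) (hTdim : Module.finrank K T = m + n)
    (r : Projectivization K (Fin (2 * n + m + 1) → K))
    (hr : ¬ r.submodule ≤ H)
    (a b : Projectivization K (Fin (2 * n + m + 1) → K) → ZMod p)
    (ha : a = fun x => if x.submodule ≤ U ⊔ r.submodule then 1 else 0)
    (hb : b = fun x => if x.submodule ≤ T ⊔ r.submodule then 1 else 0) :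
    ∀ w ∈ Submodule.span (ZMod p)
        {v : Projectivization K (Fin (2 * n + m + 1) → K) → ZMod p |
          ∃ W : Submodule K (Fin (2 * n + m + 1) → K),
            Module.finrank K W = n + 1 ∧
            v = fun x => if x.submodule ≤ W then 1 else 0},
      ∑ x, (a x - b x) * w x = 0 := by
  classical
  have hVrank : finrank K (Fin (2 * n + m + 1) → K) = 2 * n + m + 1 := Module.finrank_fin_fun K
  -- finrank of cone over a subspace S ≤ H of finrank m+n is m+n+1
  have cone_rank : ∀ S : Submodule K (Fin (2 * n + m + 1) → K), S ≤ H → finrank K S = m + n →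
      finrank K (S ⊔ r.submodule : Submodule K (Fin (2 * n + m + 1) → K)) = m + n + 1 := by
    intro S hSH hSd
    have hinf : S ⊓ r.submodule = ⊥ := by
      by_contra hne
      have h1 : 1 ≤ finrank K (S ⊓ r.submodule : Submodule K (Fin (2 * n + m + 1) → K)) := by
        rcases Nat.eq_zero_or_pos (finrank K (S ⊓ r.submodule : Submodule K (Fin (2 * n + m + 1) → K))) with h0 | h0
        · exact absurd (Submodule.finrank_eq_zero.mp h0) hne
        · exact h0
      have hle : S ⊓ r.submodule ≤ r.submodule := inf_le_right
      have heq : S ⊓ r.submodule = r.submodule :=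
        Submodule.eq_of_le_of_finrank_le hle (by rw [r.finrank_submodule]; exact h1)
      exact hr (heq ▸ (inf_le_left.trans hSH))
    have := Submodule.finrank_sup_add_finrank_inf_eq S r.submodule
    rw [hinf, hSd, r.finrank_submodule, finrank_bot] at this
    omega
  have hUrank := cone_rank U hU hUdim
  have hTrank := cone_rank T hT hTdim
  -- key: cone meets every (n+1)-rank W nontrivially
  have key : ∀ S : Submodule K (Fin (2 * n + m + 1) → K), finrank K S = m + n + 1 →
      ∀ W : Submodule K (Fin (2 * n + m + 1) → K), finrank K W = n + 1 →
      ∑ x : Projectivization K (Fin (2 * n + m + 1) → K), (if x.submodule ≤ S ⊓ W then (1 : ZMod p) else 0) = 1 := by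
    intro S hS W hW
    apply sum_indicator_eq_one p h hp hh hK
    intro hbot
    have h1 := Submodule.finrank_sup_add_finrank_inf_eq S W
    have h2 : finrank K (S ⊔ W : Submodule K (Fin (2 * n + m + 1) → K)) ≤ 2 * n + m + 1 := by
      exact le_trans (Submodule.finrank_le _) (le_of_eq hVrank)
    rw [hbot, finrank_bot, hS, hW] at h1
    omega
  intro w hw
  induction hw using Submodule.span_induction with
  | mem v hv =>
    obtain ⟨W, hWd, rfl⟩ := hv
    have expand : ∀ (S : Submodule K (Fin (2 * n + m + 1) → K))
        (x : Projectivization K (Fin (2 * n + m + 1) → K)),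
        (if x.submodule ≤ S then (1 : ZMod p) else 0) *
        (if x.submodule ≤ W then (1 : ZMod p) else 0) =
        (if x.submodule ≤ S ⊓ W then (1 : ZMod p) else 0) := by
      intro S x
      by_cases h1 : x.submodule ≤ S <;> by_cases h2 : x.submodule ≤ W <;>
        simp [h1, h2, le_inf_iff]
    have : ∑ x : Projectivization K (Fin (2 * n + m + 1) → K), (a x - b x) *
        (if x.submodule ≤ W then (1 : ZMod p) else 0)
        = ∑ x : Projectivization K (Fin (2 * n + m + 1) → K),
          ((if x.submodule ≤ (U ⊔ r.submodule) ⊓ W then (1 : ZMod p) else 0)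
          - (if x.submodule ≤ (T ⊔ r.submodule) ⊓ W then (1 : ZMod p) else 0)) := by
      apply Finset.sum_congr rfl
      intro x _
      rw [ha, hb]
      simp only [sub_mul, expand]
    rw [this, Finset.sum_sub_distrib,
      key _ hUrank W hWd, key _ hTrank W hWd, sub_self]
  | zero => simp
  | add v v' _ _ ihv ihv' =>
    simp only [Pi.add_apply, mul_add, Finset.sum_add_distrib, ihv, ihv', add_zero]
  | smul c v _ ihv =>
    have hx : ∀ x, (a x - b x) * ((c • v) x) = c * ((a x - b x) * v x) := fun x => by
      simp only [Pi.smul_apply, smul_eq_mul]; ring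
    simp only [hx, ← Finset.mul_sum, ihv, mul_zero]
end

section
/- For the binary code C that is the dual of the F_2-code generated by the point–line incidence matrix of a generalised quadrangle of order (s,t) whose minimum-weight codewords in C⊥ are exactly the incidence vectors of lines (of weight s+1), the repair degree equals s and the repair availability equals t+1, so both bounds r ≤ s and a ≥ t+1 of Pamies-Juarez–Hollmann–Oggier are attained with equality. -/
attribute [local instance] Classical.propDecidable

/-- The Hamming weight of a vector. -/
noncomputable def hWt {ι : Type*} {p : ℕ} (v : ι → ZMod p) : ℕ := Nat.card {x : ι // v x ≠ 0}

/-- The dual code of a linear code over `F_p`. -/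
def dualCode {ι : Type*} [Fintype ι] {p : ℕ}
    (C : Submodule (ZMod p) (ι → ZMod p)) : Submodule (ZMod p) (ι → ZMod p) where
  carrier := {v | ∀ u ∈ C, ∑ x, v x * u x = 0}
  add_mem' := by
    intro a b ha hb u hu
    simp only [Pi.add_apply, add_mul]
    rw [Finset.sum_add_distrib, ha u hu, hb u hu, add_zero]
  zero_mem' := by intro u hu; simp
  smul_mem' := by
    intro c a ha u hu
    simp only [Pi.smul_apply, smul_eq_mul, mul_assoc]
    rw [← Finset.mul_sum, ha u hu, mul_zero]

/-- The repair degree of the `i`-th symbol of a code `C'`: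
`r(i) = min { wt(v) - 1 : v ∈ Ω(i) }` where `Ω(i) = { v ∈ (C')⊥ : v_i ≠ 0 }`. -/
noncomputable def repairDeg {ι : Type*} [Fintype ι] {p : ℕ}
    (C' : Submodule (ZMod p) (ι → ZMod p)) (i : ι) : ℕ :=
  sInf {k : ℕ | ∃ v ∈ dualCode C', v i ≠ 0 ∧ hWt v - 1 = k}

/-- The overall repair degree `r = max_i r(i)`. -/
noncomputable def overallRepairDeg {ι : Type*} [Fintype ι] {p : ℕ}
    (C' : Submodule (ZMod p) (ι → ZMod p)) : ℕ :=
  Finset.univ.sup (repairDeg C')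

/-- The repair availability of symbol `i`: `a(i) = |Ω_r(i)|` where
`Ω_r(i) = { v ∈ Ω(i) : wt(v) ≤ r + 1 }`. -/
noncomputable def repairAvail {ι : Type*} [Fintype ι] {p : ℕ}
    (C' : Submodule (ZMod p) (ι → ZMod p)) (i : ι) : ℕ :=
  Nat.card {v : ι → ZMod p // v ∈ dualCode C' ∧ v i ≠ 0 ∧
    hWt v ≤ overallRepairDeg C' + 1}

/-- The overall repair availability `a = min_i a(i)`. -/
noncomputable def overallRepairAvail {ι : Type*} [Fintype ι] [Nonempty ι] {p : ℕ}
    (C' : Submodule (ZMod p) (ι → ZMod p)) : ℕ :=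
  Finset.univ.inf' Finset.univ_nonempty (repairAvail C')


/-- For the binary code `C` dual to the `F_2`-row span of the point-line incidence matrix of
a generalised quadrangle of order `(s,t)`, if the minimum-weight codewords of `C⊥` are
exactly the incidence vectors of the lines (of weight `s+1`), then the repair degree of `C`
equals `s` and its repair availability equals `t+1`; i.e. the bounds `r ≤ s` and `a ≥ t+1`
of Pamies-Juarez, Hollmann and Oggier are attained with equality. -/
theorem binary_pgBLRC_repair_degree_and_availability
    (s t : ℕ) (hs : 1 ≤ s) (ht : 1 ≤ t)
    {P L : Type*} [Fintype P] [Fintype L] [Nonempty P]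
    (I : P → L → Prop)
    (hdeg : ∀ x : P, Nat.card {l : L // I x l} = t + 1)
    (hsize : ∀ l : L, Nat.card {x : P // I x l} = s + 1)
    (hpts : ∀ p₁ p₂ : P, ∀ l₁ l₂ : L, p₁ ≠ p₂ →
      I p₁ l₁ → I p₂ l₁ → I p₁ l₂ → I p₂ l₂ → l₁ = l₂)
    (hGQ : ∀ (x : P) (l : L), ¬ I x l →
      ∃! m : L, I x m ∧ ∃ y : P, I y m ∧ I y l)
    (M : Submodule (ZMod 2) (P → ZMod 2))
    (hM : M = Submodule.span (ZMod 2)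
      {v : P → ZMod 2 | ∃ l : L, v = fun x => if I x l then 1 else 0})
    (hmin : ∀ v ∈ dualCode (dualCode M), v ≠ 0 → s + 1 ≤ hWt v)
    (hchar : ∀ v ∈ dualCode (dualCode M),
      (hWt v = s + 1 ↔ ∃ l : L, v = fun x => if I x l then (1 : ZMod 2) else 0)) :
    overallRepairDeg (dualCode M) = s ∧ overallRepairAvail (dualCode M) = t + 1 := by

  classical
  have hsub : ∀ v ∈ M, v ∈ dualCode (dualCode M) := by
    intro v hv u hu
    have h := hu v hv
    rw [← h]
    exact Finset.sum_congr rfl (fun x _ => mul_comm _ _)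
  have hline_mem : ∀ l : L,
      (fun x => if I x l then (1 : ZMod 2) else 0) ∈ dualCode (dualCode M) := by
    intro l
    exact hsub _ (hM ▸ Submodule.subset_span ⟨l, rfl⟩)
  have hiff : ∀ (l : L) (x : P), ((if I x l then (1 : ZMod 2) else 0) ≠ 0) ↔ I x l := by
    intro l x
    by_cases h : I x l <;> simp [h]
  have hwt_line : ∀ l : L, hWt (fun x => if I x l then (1 : ZMod 2) else 0) = s + 1 := by
    intro l
    unfold hWt
    rw [Nat.card_congr (Equiv.subtypeEquivRight (hiff l))]
    exact hsize l
  have hrd : ∀ i : P, repairDeg (dualCode M) i = s := by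
    intro i
    obtain ⟨l, hl⟩ : ∃ l, I i l := by
      have h := hdeg i
      have h2 : Nat.card {l : L // I i l} ≠ 0 := by omega
      obtain ⟨⟨l, hl⟩⟩ := Nat.card_ne_zero.mp h2 |>.1
      exact ⟨l, hl⟩
    apply le_antisymm
    · apply Nat.sInf_le
      exact ⟨_, hline_mem l, by simp [hl], by simp [hwt_line]⟩
    · refine le_csInf ⟨s, ⟨_, hline_mem l, by simp [hl], by simp [hwt_line]⟩⟩ ?_
      rintro k ⟨v, hv, hvi, rfl⟩
      have hvne : v ≠ 0 := fun h => hvi (by simp [h])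
      have := hmin v hv hvne
      omega
  have hr : overallRepairDeg (dualCode M) = s := by
    unfold overallRepairDeg
    rw [Finset.sup_congr rfl (fun i _ => hrd i)]
    exact Finset.sup_const Finset.univ_nonempty s
  refine ⟨hr, ?_⟩
  have hav : ∀ i : P, repairAvail (dualCode M) i = t + 1 := by
    intro i
    unfold repairAvail
    rw [← hdeg i]
    apply Nat.card_congr
    symm
    refine Equiv.ofBijective (fun l => ⟨fun x => if I x l.1 then (1 : ZMod 2) else 0,
      hline_mem l.1, by simp [l.2], by rw [hwt_line, hr]⟩) ⟨?_, ?_⟩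
    · rintro ⟨l₁, hl₁⟩ ⟨l₂, hl₂⟩ heq
      have heq' : ∀ x : P, I x l₁ ↔ I x l₂ := by
        intro x
        have := congrFun (congrArg Subtype.val heq) x
        by_cases h1 : I x l₁ <;> by_cases h2 : I x l₂ <;> simp [h1, h2] at this ⊢
      have hcard : 1 < Fintype.card {x : P // I x l₁} := by
        have := hsize l₁
        rw [Nat.card_eq_fintype_card] at this
        omega
      obtain ⟨⟨a, ha⟩, ⟨b, hb⟩, hab⟩ := Fintype.exists_pair_of_one_lt_card hcard
      have habp : a ≠ b := fun h => hab (Subtype.ext h)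
      exact Subtype.ext (hpts a b l₁ l₂ habp ha hb ((heq' a).mp ha) ((heq' b).mp hb))
    · rintro ⟨v, hv, hvi, hvw⟩
      have hvne : v ≠ 0 := fun h => hvi (by simp [h])
      have h1 := hmin v hv hvne
      rw [hr] at hvw
      have h2 : hWt v = s + 1 := le_antisymm hvw h1
      obtain ⟨l, hl⟩ := (hchar v hv).mp h2
      have hil : I i l := by
        rw [hl] at hvi
        exact (hiff l i).mp hvi
      exact ⟨⟨l, hil⟩, Subtype.ext hl.symm⟩
  unfold overallRepairAvail
  rw [Finset.inf'_congr Finset.univ_nonempty rfl (fun i _ => hav i)]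
  exact Finset.inf'_const _ _
end
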